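/- Every 5-element subset S of Z/11Z whose palette graph is connected is the image of {1,4,6,7,8} or of {0,4,6,7,8} under some affine map f(x) = αx + β with α ≠ 0 in Z/11Z. -/

import Mathlib

/-- The palette graph of a subset `S ⊆ ℤ/11ℤ`: vertices are elements of `S`,
distinct `a, b` are adjacent iff `(a+b)/2 = 6(a+b)` lies in `S`
(`6 = 2⁻¹` in `ℤ/11ℤ`). -/
def paletteGraph (S : Set (ZMod 11)) : SimpleGraph S where
  Adj a b := (a : ZMod 11) ≠ (b : ZMod 11) ∧ 6 * ((a : ZMod 11) + b) ∈ S
  symm := by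
    constructor
    rintro a b ⟨h, hm⟩
    exact ⟨h.symm, by rwa [add_comm]⟩
  loopless := ⟨fun a h => h.1 rfl⟩

namespace PaletteAux

/-- membership in a bitmask -/
def memB (m i : Nat) : Bool := m.testBit i

def stepL (m : Nat) (R : List Nat) : List Nat :=
  R ++ (List.range 11).filter (fun b => memB m b &&
    R.any (fun a => (a != b) && memB m ((6 * (a + b)) % 11)))

def iterStep (m : Nat) : Nat → List Nat → List Nat
  | 0, R => R
  | n + 1, R => iterStep m n (stepL m R)

def elemsL (m : Nat) : List Nat := (List.range 11).filter (memB m)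

def closL (m a : Nat) : List Nat := iterStep m 4 [a]

def connB (m : Nat) : Bool :=
  (elemsL m).all fun b => (closL m ((elemsL m).headD 0)).any (fun x => x == b)

def imgL (α β : Nat) (bs : List Nat) : List Nat := bs.map (fun x => (α * x + β) % 11)

def eqSetB (l : List Nat) (m : Nat) : Bool :=
  l.all (memB m) && (elemsL m).all (fun b => l.any (fun x => x == b))

def affB (m : Nat) : Bool :=
  (List.range 11).any fun α => (α != 0) && (List.range 11).any fun β =>
    (eqSetB (imgL α β [1, 4, 6, 7, 8]) m || eqSetB (imgL α β [0, 4, 6, 7, 8]) m)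

def checkB (m : Nat) : Bool :=
  !(((elemsL m).length == 5) && connB m) || affB m

set_option maxRecDepth 10000 in
set_option maxHeartbeats 12000000 in
lemma checkB_chunks : ∀ i : Fin 16, ∀ k : Fin 128, checkB (128 * i.val + k.val) = true := by
  decide

lemma checkB_all {m : Nat} (hm : m < 2048) : checkB m = true := by
  have h := checkB_chunks ⟨m / 128, by omega⟩ ⟨m % 128, by omega⟩
  simpa [Nat.div_add_mod] using h

/-- the bitmask of a boolean function on `{0,...,n-1}` -/
def maskF (g : Nat → Bool) : Nat → Nat
  | 0 => 0
  | n + 1 => 2 ^ n * (cond (g n) 1 0) + maskF g n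

lemma maskF_lt (g : Nat → Bool) : ∀ n, maskF g n < 2 ^ n
  | 0 => by simp [maskF]
  | n + 1 => by
    have ih := maskF_lt g n
    have h2 : 2 ^ (n + 1) = 2 ^ n + 2 ^ n := by ring
    cases hg : g n <;> simp [maskF, hg] <;> omega

lemma testBit_maskF (g : Nat → Bool) : ∀ n i, (maskF g n).testBit i = (decide (i < n) && g i)
  | 0, i => by simp [maskF]
  | n + 1, i => by
    have ih := testBit_maskF g n
    have hlt := maskF_lt g n
    rcases lt_trichotomy i n with h | h | h
    · have : decide (i < n + 1) = true := by simp; omega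
      cases hg : g n
      · simp only [maskF, hg, cond_false, Nat.mul_zero, Nat.zero_add, ih, this]
        simp [h]
      · simp only [maskF, hg, cond_true, Nat.mul_one]
        rw [Nat.testBit_two_pow_add_gt h, ih, this]
        simp [h]
    · subst h
      cases hg : g i
      · simp only [maskF, hg, cond_false, Nat.mul_zero, Nat.zero_add]
        rw [Nat.testBit_lt_two_pow hlt]
        simp [hg]
      · simp only [maskF, hg, cond_true, Nat.mul_one]
        rw [Nat.testBit_two_pow_add_eq, Nat.testBit_lt_two_pow hlt]
        simp
    · have hfalse : decide (i < n + 1) = false := by simp; omega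
      have hbig : maskF g (n + 1) < 2 ^ i := by
        have h1 : maskF g (n + 1) < 2 ^ (n + 1) := maskF_lt g (n + 1)
        have h2 : 2 ^ (n + 1) ≤ 2 ^ i := Nat.pow_le_pow_right (by norm_num) h
        omega
      rw [Nat.testBit_lt_two_pow hbig, hfalse]
      simp

lemma subset_stepL (m : Nat) (R : List Nat) : R ⊆ stepL m R :=
  fun _ hx => List.mem_append_left _ hx

lemma stepL_mono (m : Nat) {R R' : List Nat} (h : R ⊆ R') : stepL m R ⊆ stepL m R' := by
  intro x hx
  rcases List.mem_append.1 hx with hx | hx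
  · exact List.mem_append_left _ (h hx)
  · refine List.mem_append_right _ ?_
    rw [List.mem_filter] at hx ⊢
    refine ⟨hx.1, ?_⟩
    have h2 := hx.2
    simp only [Bool.and_eq_true, List.any_eq_true] at h2 ⊢
    obtain ⟨h2a, a, ha, h2b⟩ := h2
    exact ⟨h2a, a, h ha, h2b⟩

lemma iterStep_mono (m : Nat) : ∀ n, ∀ {R R' : List Nat}, R ⊆ R' →
    iterStep m n R ⊆ iterStep m n R'
  | 0, _, _, h => h
  | n + 1, _, _, h => iterStep_mono m n (stepL_mono m h)

lemma subset_iterStep (m : Nat) : ∀ n (R : List Nat), R ⊆ iterStep m n R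
  | 0, R => fun _ h => h
  | n + 1, R => fun x hx => subset_iterStep m n (stepL m R) (subset_stepL m R hx)

lemma iterStep_le (m : Nat) : ∀ {k n : Nat}, k ≤ n → ∀ (R : List Nat),
    iterStep m k R ⊆ iterStep m n R := by
  intro k n hkn
  induction n with
  | zero =>
    intro R
    have hk : k = 0 := Nat.le_zero.1 hkn
    subst hk
    exact List.Subset.refl _
  | succ n ih =>
    intro R
    rcases Nat.lt_or_ge k (n + 1) with h | h
    · have h1 : iterStep m k R ⊆ iterStep m n R := ih (by omega) R
      have h2 : iterStep m n R ⊆ iterStep m n (stepL m R) :=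
        iterStep_mono m n (subset_stepL m R)
      exact fun x hx => h2 (h1 hx)
    · have hk : k = n + 1 := by omega
      subst hk
      exact List.Subset.refl _

section Bridge

variable (S : Set (ZMod 11)) (m : Nat)
variable (Hmem : ∀ x : ZMod 11, memB m x.val = true ↔ x ∈ S)

lemma val_six_mul {a b : ZMod 11} :
    (6 * (a + b)).val = (6 * (a.val + b.val)) % 11 := by
  rw [ZMod.val_mul, ZMod.val_add]
  have h6 : (6 : ZMod 11).val = 6 := rfl
  rw [h6, Nat.mul_mod, Nat.mod_mod_of_dvd _ (by norm_num), ← Nat.mul_mod]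

include Hmem in
lemma adj_step {a b : ZMod 11} (hne : a ≠ b) (hmid : 6 * (a + b) ∈ S) (hb : b ∈ S)
    {R : List Nat} (ha : a.val ∈ R) : b.val ∈ stepL m R := by
  refine List.mem_append_right _ ?_
  rw [List.mem_filter]
  refine ⟨List.mem_range.2 b.val_lt, ?_⟩
  simp only [Bool.and_eq_true, List.any_eq_true]
  refine ⟨(Hmem b).2 hb, a.val, ha, ?_⟩
  have hne' : a.val ≠ b.val := fun h => hne (ZMod.val_injective _ h)
  simp only [bne_iff_ne, ne_eq, hne', not_false_eq_true, true_and]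
  rw [← val_six_mul]
  exact (Hmem _).2 hmid

include Hmem in
lemma walk_clos {u v : ↥S} (p : (paletteGraph S).Walk u v) :
    (v : ZMod 11).val ∈ iterStep m p.length [(u : ZMod 11).val] := by
  induction p with
  | nil => simp [iterStep]
  | @cons u w v h q ih =>
    have h : (u : ZMod 11) ≠ w ∧ 6 * ((u : ZMod 11) + w) ∈ S := h
    have hw : (w : ZMod 11).val ∈ stepL m [(u : ZMod 11).val] :=
      adj_step S m Hmem h.1 h.2 w.2 (List.mem_singleton.2 rfl)
    have hsub : [(w : ZMod 11).val] ⊆ stepL m [(u : ZMod 11).val] := by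
      intro x hx; rw [List.mem_singleton] at hx; subst hx; exact hw
    have := iterStep_mono m q.length hsub ih
    simpa [SimpleGraph.Walk.length_cons, iterStep] using this

include Hmem in
lemma reachable_clos {u v : ↥S} (hS5 : S.ncard = 5)
    (h : (paletteGraph S).Reachable u v) :
    (v : ZMod 11).val ∈ closL m (u : ZMod 11).val := by
  have hfin : S.Finite := Set.toFinite S
  haveI : Fintype ↥S := hfin.fintype
  have hcard : Fintype.card ↥S = 5 := by
    rw [← Nat.card_eq_fintype_card, Nat.card_coe_set_eq, hS5]
  refine h.elim_path fun p => ?_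
  have hlen : p.1.length ≤ 4 := by
    have := p.2.length_lt
    omega
  exact iterStep_le m hlen _ (walk_clos S m Hmem p.1)

end Bridge

lemma natCast_eq_of_cond {α β c : Nat} :
    (((α * c + β) % 11 : Nat) : ZMod 11) = (α : ZMod 11) * c + β := by
  rw [ZMod.natCast_mod]
  push_cast
  ring

end PaletteAux

open PaletteAux
theorem connected_five_subset_affine_image
    (S : Set (ZMod 11)) (h5 : S.ncard = 5) (hconn : (paletteGraph S).Connected) :
    ∃ α β : ZMod 11, α ≠ 0 ∧
      ((fun x => α * x + β) '' ({1, 4, 6, 7, 8} : Set (ZMod 11)) = S ∨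
       (fun x => α * x + β) '' ({0, 4, 6, 7, 8} : Set (ZMod 11)) = S) := by
  classical
  set g : Nat → Bool := fun i => decide ((i : ZMod 11) ∈ S) with hg
  set m : Nat := maskF g 11 with hmdef
  have Hmem : ∀ x : ZMod 11, memB m x.val = true ↔ x ∈ S := by
    intro x
    rw [hmdef, memB, testBit_maskF]
    have : x.val < 11 := x.val_lt
    simp only [this, decide_true, Bool.true_and, hg, decide_eq_true_eq]
    rw [show ((x.val : Nat) : ZMod 11) = x by simp [ZMod.natCast_val, ZMod.cast_id]]
  have Hmem' : ∀ i : Nat, i < 11 → (memB m i = true ↔ ((i : ZMod 11) ∈ S)) := by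
    intro i hi
    have := Hmem (i : ZMod 11)
    rwa [ZMod.val_natCast_of_lt hi] at this
  -- elems of m are exactly vals of S
  have helems : ∀ i : Nat, i ∈ elemsL m ↔ i < 11 ∧ ((i : ZMod 11) ∈ S) := by
    intro i
    rw [elemsL, List.mem_filter, List.mem_range]
    constructor
    · rintro ⟨h1, h2⟩; exact ⟨h1, (Hmem' i h1).1 h2⟩
    · rintro ⟨h1, h2⟩; exact ⟨h1, (Hmem' i h1).2 h2⟩
  -- card bridge
  have hfin : S.Finite := Set.toFinite S
  haveI : Fintype ↥S := hfin.fintype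
  have hlen : (elemsL m).length = 5 := by
    have hnd : (elemsL m).Nodup := (List.nodup_range).filter _
    have h1 : (elemsL m).length = (Finset.mk (elemsL m : Multiset Nat) hnd).card := rfl
    rw [h1, ← h5, Set.ncard_eq_toFinset_card' S]
    have hmemF : ∀ i : Nat, i ∈ Finset.mk (elemsL m : Multiset Nat) hnd ↔ i ∈ elemsL m := by
      intro i; exact Multiset.mem_coe
    refine Finset.card_bij (fun i _ => ((i : ZMod 11))) ?_ ?_ ?_
    · intro a ha
      rw [hmemF, helems] at ha
      rw [Set.mem_toFinset]
      exact ha.2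
    · intro a ha b hb hab
      rw [hmemF, helems] at ha hb
      have h2 : ((a : ZMod 11)).val = ((b : ZMod 11)).val := congrArg ZMod.val hab
      rwa [ZMod.val_natCast_of_lt ha.1, ZMod.val_natCast_of_lt hb.1] at h2
    · intro x hx
      rw [Set.mem_toFinset] at hx
      refine ⟨x.val, ?_, by simp [ZMod.natCast_val, ZMod.cast_id]⟩
      rw [hmemF, helems]
      exact ⟨x.val_lt, by simpa [ZMod.natCast_val, ZMod.cast_id] using hx⟩
  -- connectivity bridge
  have hm2048 : m < 2048 := maskF_lt g 11
  have hconnB : connB m = true := by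
    obtain ⟨a0, rest, he⟩ : ∃ a l, elemsL m = a :: l := by
      cases h : elemsL m with
      | nil => rw [h] at hlen; simp at hlen
      | cons a l => exact ⟨a, l, rfl⟩
    have ha0 : a0 ∈ elemsL m := he ▸ (List.mem_cons_self : a0 ∈ a0 :: rest)
    obtain ⟨ha0lt, ha0S⟩ := (helems a0).1 ha0
    have hhead : (elemsL m).headD 0 = a0 := by rw [he]; rfl
    rw [connB, hhead, List.all_eq_true]
    intro b hb
    obtain ⟨hblt, hbS⟩ := (helems b).1 hb
    have hreach : (paletteGraph S).Reachable ⟨(a0 : ZMod 11), ha0S⟩ ⟨(b : ZMod 11), hbS⟩ :=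
      hconn.preconnected _ _
    have := reachable_clos S m Hmem h5 hreach
    simp only [ZMod.val_natCast_of_lt ha0lt, ZMod.val_natCast_of_lt hblt] at this
    simp only [List.any_eq_true, beq_iff_eq]
    exact ⟨b, this, rfl⟩
  -- apply the decided fact
  have hcheck := checkB_all hm2048
  rw [checkB] at hcheck
  have hguard : (((elemsL m).length == 5) && connB m) = true := by
    rw [hconnB, hlen]; rfl
  rw [hguard] at hcheck
  simp only [Bool.not_true, Bool.false_or] at hcheck
  -- unpack affB
  rw [affB, List.any_eq_true] at hcheck
  obtain ⟨α, hαmem, hα⟩ := hcheck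
  rw [Bool.and_eq_true, List.any_eq_true] at hα
  obtain ⟨hα0, β, hβmem, hβ⟩ := hα
  rw [List.mem_range] at hαmem hβmem
  have hα0' : α ≠ 0 := by simpa using hα0
  refine ⟨(α : ZMod 11), (β : ZMod 11), ?_, ?_⟩
  · intro h
    have : ((α : Nat) : ZMod 11).val = (0 : ZMod 11).val := by rw [h]
    rw [ZMod.val_natCast_of_lt hαmem, ZMod.val_zero] at this
    exact hα0' this
  · -- translate eqSetB to set image equality
    have key : ∀ (bs : List Nat) (bsS : Set (ZMod 11)),
        (∀ x : ZMod 11, x ∈ bsS ↔ ∃ c ∈ bs, (c : ZMod 11) = x) →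
        eqSetB (imgL α β bs) m = true →
        (fun x => (α : ZMod 11) * x + β) '' bsS = S := by
      intro bs bsS hbs heq
      rw [eqSetB, Bool.and_eq_true, List.all_eq_true, List.all_eq_true] at heq
      obtain ⟨H1, H2⟩ := heq
      ext x
      constructor
      · rintro ⟨y, hy, rfl⟩
        obtain ⟨c, hc, rfl⟩ := (hbs y).1 hy
        have hmem : memB m ((α * c + β) % 11) = true := by
          apply H1
          rw [imgL, List.mem_map]
          exact ⟨c, hc, rfl⟩
        have := (Hmem' _ (Nat.mod_lt _ (by norm_num))).1 hmem
        rwa [natCast_eq_of_cond] at this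
      · intro hx
        have hxe : x.val ∈ elemsL m := (helems x.val).2 ⟨x.val_lt, by
          simpa [ZMod.natCast_val, ZMod.cast_id] using hx⟩
        have := H2 _ hxe
        rw [List.any_eq_true] at this
        obtain ⟨y, hy, hyx⟩ := this
        rw [imgL, List.mem_map] at hy
        obtain ⟨c, hc, rfl⟩ := hy
        rw [beq_iff_eq] at hyx
        refine ⟨(c : ZMod 11), (hbs _).2 ⟨c, hc, rfl⟩, ?_⟩
        have : (((α * c + β) % 11 : Nat) : ZMod 11) = ((x.val : Nat) : ZMod 11) := by
          rw [hyx]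
        rw [natCast_eq_of_cond] at this
        show (α : ZMod 11) * (c : ZMod 11) + (β : ZMod 11) = x
        rw [this]
        simp [ZMod.natCast_val, ZMod.cast_id]
    rw [Bool.or_eq_true] at hβ
    rcases hβ with h | h
    · left
      apply key [1, 4, 6, 7, 8] _ ?_ h
      intro x
      simp only [Set.mem_insert_iff, Set.mem_singleton_iff, List.mem_cons, List.not_mem_nil]
      constructor
      · rintro (rfl | rfl | rfl | rfl | rfl)
        exacts [⟨1, by norm_num⟩, ⟨4, by norm_num⟩, ⟨6, by norm_num⟩,
          ⟨7, by norm_num⟩, ⟨8, by norm_num⟩]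
      · rintro ⟨c, hc, rfl⟩
        rcases hc with rfl | rfl | rfl | rfl | rfl | h
        · left; norm_num
        · right; left; norm_num
        · right; right; left; norm_num
        · right; right; right; left; norm_num
        · right; right; right; right; norm_num
        · simp at h
    · right
      apply key [0, 4, 6, 7, 8] _ ?_ h
      intro x
      simp only [Set.mem_insert_iff, Set.mem_singleton_iff, List.mem_cons, List.not_mem_nil]
      constructor
      · rintro (rfl | rfl | rfl | rfl | rfl)
        exacts [⟨0, by norm_num⟩, ⟨4, by norm_num⟩, ⟨6, by norm_num⟩,
          ⟨7, by norm_num⟩, ⟨8, by norm_num⟩]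
      · rintro ⟨c, hc, rfl⟩
        rcases hc with rfl | rfl | rfl | rfl | rfl | h
        · left; norm_num
        · right; left; norm_num
        · right; right; left; norm_num
        · right; right; right; left; norm_num
        · right; right; right; right; norm_num
        · simp at h
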